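/- arXiv:2412.03729 — 6 statements merged into one kernel-verified Lean document; each statement's English description precedes it below -/
import Mathlib

section
/- Let f : Ω × X → X be a random map on a compact metric space such that for all x, y in X, d(f_ω^n(x), f_ω^n(y)) → 0 as n → ∞ for ℙ-almost every ω (synchronization). Then f admits at most one stationary probability measure. -/
/-!
Since `ω ↦ (ω₀, σω)` carries `ℙ` to `p ⊗ ℙ` and `f_ω^{n+1} = f_{σω}^n ∘ f_{ω₀}`, stationarity
iterates to `∫∫ φ (f_ω^n x) dμ dℙ = ∫ φ dμ` for every `n`. Hence for continuous `φ`,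
`∫ φ dμ - ∫ φ dν = ∫ (φ (f_ω^n x) - φ (f_ω^n y)) d(ℙ ⊗ μ ⊗ ν)(ω, x, y)` for every `n`.
By synchronization and uniform continuity of `φ` the integrand tends to `0` almost everywhere,
so by dominated convergence the right-hand side tends to `0`.
-/

open MeasureTheory Filter

/-- Iterated compositions `f_ω^n = f_{ω_{n-1}} ∘ ⋯ ∘ f_{ω_0}` of a random map. -/
def iterRM {T X : Type*} (f : T → X → X) (ω : ℕ → T) : ℕ → X → X
  | 0 => id
  | n + 1 => f (ω n) ∘ iterRM f ω n

open Topology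

section iterRM

variable {T X : Type*} {f : T → X → X}

theorem iterRM_succ_apply (ω : ℕ → T) (n : ℕ) (x : X) :
    iterRM f ω (n + 1) x = iterRM f (fun k => ω (k + 1)) n (f (ω 0) x) := by
  induction n with
  | zero => rfl
  | succ n ih => exact congrArg (f (ω (n + 1))) ih

theorem continuous_iterRM [TopologicalSpace X] (hf : ∀ t, Continuous (f t)) (ω : ℕ → T)
    (n : ℕ) : Continuous (iterRM f ω n) := by
  induction n with
  | zero => exact continuous_id
  | succ n ih => exact (hf _).comp ih

@[fun_prop]
theorem Measurable.iterRM {α : Type*} [MeasurableSpace T] [MeasurableSpace X] [MeasurableSpace α]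
    (hf : Measurable (Function.uncurry f)) {g : α → ℕ → T} {h : α → X} (hg : Measurable g)
    (hh : Measurable h) (n : ℕ) : Measurable fun a => iterRM f (g a) n (h a) := by
  induction n with
  | zero => exact hh
  | succ n ih => exact hf.comp (((measurable_pi_apply n).comp hg).prodMk ih)

end iterRM

theorem ContinuousMap.integrable_comp {X Y : Type*} [TopologicalSpace X] [CompactSpace X]
    [MeasurableSpace X] [OpensMeasurableSpace X] [MeasurableSpace Y] (φ : C(X, ℝ)) {g : Y → X}
    (hg : Measurable g) (ν : Measure Y) [IsFiniteMeasure ν] :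
    Integrable (fun y => φ (g y)) ν :=
  ((BoundedContinuousFunction.mkOfCompact φ).integrable (ν.map g)).comp_measurable hg

theorem integral_comp_head_tail {T : Type*} [MeasurableSpace T] {p : Measure T} [SFinite p]
    {ℙ : Measure (ℕ → T)} [IsProbabilityMeasure ℙ]
    (hbern : ℙ.map (fun ω => (ω 0, fun n => ω (n + 1))) = p.prod ℙ)
    {G : T × (ℕ → T) → ℝ} (hG : Integrable G (p.prod ℙ)) :
    ∫ ω, G (ω 0, fun n => ω (n + 1)) ∂ℙ = ∫ ω', ∫ ω, G (ω 0, ω') ∂ℙ ∂ℙ := by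
  have hsplit : Measurable fun ω : ℕ → T => (ω 0, fun n => ω (n + 1)) := by fun_prop
  have hp : ℙ.map (· 0) = p := by
    rw [show (· 0) = Prod.fst ∘ fun ω : ℕ → T => (ω 0, fun n => ω (n + 1)) from rfl,
      ← Measure.map_map measurable_fst hsplit, hbern, Measure.map_fst_prod, measure_univ,
      one_smul]
  rw [← integral_map hsplit.aemeasurable (hbern ▸ hG.aestronglyMeasurable), hbern,
    integral_prod_symm G hG]
  subst hp
  refine integral_congr_ae ?_
  filter_upwards [hG.prod_left_ae] with ω' hω'
  exact integral_map (measurable_pi_apply 0).aemeasurable hω'.aestronglyMeasurable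

section stationary

variable {T X : Type*} [MeasurableSpace T] [MeasurableSpace X] {f : T → X → X}
  {p : Measure T} [IsFiniteMeasure p] {ℙ : Measure (ℕ → T)} [IsProbabilityMeasure ℙ]

theorem integral_integral_iterRM_of_stationary [TopologicalSpace X] [CompactSpace X]
    [OpensMeasurableSpace X] (hbern : ℙ.map (fun ω => (ω 0, fun n => ω (n + 1))) = p.prod ℙ)
    (hf : ∀ t, Continuous (f t)) (hfmeas : Measurable (Function.uncurry f))
    {μ : Measure X} [IsProbabilityMeasure μ]
    (hμ : ∀ φ : C(X, ℝ), ∫ ω, ∫ x, φ (f (ω 0) x) ∂μ ∂ℙ = ∫ x, φ x ∂μ) (φ : C(X, ℝ)) (n : ℕ) :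
    ∫ ω, ∫ x, φ (iterRM f ω n x) ∂μ ∂ℙ = ∫ x, φ x ∂μ := by
  induction n with
  | zero => simp [iterRM]
  | succ n ih =>
    set G : T × (ℕ → T) → ℝ := fun q => ∫ x, φ (iterRM f q.2 n (f q.1 x)) ∂μ
    have hG : Integrable G (p.prod ℙ) :=
      (φ.integrable_comp (g := fun qx : (T × (ℕ → T)) × X => iterRM f qx.1.2 n (f qx.1.1 qx.2))
        (by fun_prop) ((p.prod ℙ).prod μ)).integral_prod_left
    calc ∫ ω, ∫ x, φ (iterRM f ω (n + 1) x) ∂μ ∂ℙ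
        = ∫ ω, G (ω 0, fun k => ω (k + 1)) ∂ℙ := by simp only [G, iterRM_succ_apply]
      _ = ∫ ω', ∫ ω, G (ω 0, ω') ∂ℙ ∂ℙ := integral_comp_head_tail hbern hG
      _ = ∫ ω', ∫ x, φ (iterRM f ω' n x) ∂μ ∂ℙ :=
        integral_congr_ae (.of_forall fun ω' =>
          hμ (φ.comp ⟨iterRM f ω' n, continuous_iterRM hf ω' n⟩))
      _ = ∫ x, φ x ∂μ := ih

theorem integral_prod_sub_iterRM_of_stationary [TopologicalSpace X] [CompactSpace X]
    [OpensMeasurableSpace X] (hbern : ℙ.map (fun ω => (ω 0, fun n => ω (n + 1))) = p.prod ℙ)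
    (hf : ∀ t, Continuous (f t)) (hfmeas : Measurable (Function.uncurry f))
    {μ ν : Measure X} [IsProbabilityMeasure μ] [IsProbabilityMeasure ν]
    (hμ : ∀ φ : C(X, ℝ), ∫ ω, ∫ x, φ (f (ω 0) x) ∂μ ∂ℙ = ∫ x, φ x ∂μ)
    (hν : ∀ φ : C(X, ℝ), ∫ ω, ∫ x, φ (f (ω 0) x) ∂ν ∂ℙ = ∫ x, φ x ∂ν) (φ : C(X, ℝ)) (n : ℕ) :
    ∫ q, (φ (iterRM f q.1 n q.2.1) - φ (iterRM f q.1 n q.2.2)) ∂ℙ.prod (μ.prod ν)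
      = ∫ x, φ x ∂μ - ∫ x, φ x ∂ν := by
  have h₁ := φ.integrable_comp (g := fun q : (ℕ → T) × (X × X) => iterRM f q.1 n q.2.1)
    (by fun_prop) (ℙ.prod (μ.prod ν))
  have h₂ := φ.integrable_comp (g := fun q : (ℕ → T) × (X × X) => iterRM f q.1 n q.2.2)
    (by fun_prop) (ℙ.prod (μ.prod ν))
  have e₁ (ω : ℕ → T) : ∫ z, φ (iterRM f ω n z.1) ∂μ.prod ν = ∫ x, φ (iterRM f ω n x) ∂μ := by
    simp [integral_fun_fst (fun x => φ (iterRM f ω n x))]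
  have e₂ (ω : ℕ → T) : ∫ z, φ (iterRM f ω n z.2) ∂μ.prod ν = ∫ x, φ (iterRM f ω n x) ∂ν := by
    simp [integral_fun_snd (fun x => φ (iterRM f ω n x))]
  rw [integral_sub h₁ h₂, integral_prod _ h₁, integral_prod _ h₂]
  simp only [e₁, e₂]
  rw [integral_integral_iterRM_of_stationary hbern hf hfmeas hμ,
    integral_integral_iterRM_of_stationary hbern hf hfmeas hν]

end stationary

section synchronizing

variable {T X : Type*} [MeasurableSpace T] [MetricSpace X] [MeasurableSpace X] {f : T → X → X}
  {ℙ : Measure (ℕ → T)}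

theorem ae_prod_tendsto_dist_iterRM [SecondCountableTopology X] [OpensMeasurableSpace X]
    [SFinite ℙ] {κ : Measure (X × X)} [SFinite κ] (hfmeas : Measurable (Function.uncurry f))
    (hsync : ∀ x y : X, ∀ᵐ ω ∂ℙ,
      Tendsto (fun n => dist (iterRM f ω n x) (iterRM f ω n y)) atTop (𝓝 0)) :
    ∀ᵐ q ∂ℙ.prod κ,
      Tendsto (fun n => dist (iterRM f q.1 n q.2.1) (iterRM f q.1 n q.2.2)) atTop (𝓝 0) := by
  have hS : MeasurableSet {q : (ℕ → T) × (X × X) |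
      Tendsto (fun n => dist (iterRM f q.1 n q.2.1) (iterRM f q.1 n q.2.2)) atTop (𝓝 0)} :=
    measurableSet_tendsto _ fun n => by fun_prop
  refine (Measure.ae_prod_iff_ae_ae hS).2
    ((Measure.ae_ae_comm ?_).1 (.of_forall fun z => hsync z.1 z.2))
  exact measurable_swap hS

theorem tendsto_integral_prod_sub_iterRM [CompactSpace X] [BorelSpace X] [IsFiniteMeasure ℙ]
    {κ : Measure (X × X)} [IsFiniteMeasure κ] (hfmeas : Measurable (Function.uncurry f))
    (hsync : ∀ x y : X, ∀ᵐ ω ∂ℙ,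
      Tendsto (fun n => dist (iterRM f ω n x) (iterRM f ω n y)) atTop (𝓝 0)) (φ : C(X, ℝ)) :
    Tendsto (fun n => ∫ q, (φ (iterRM f q.1 n q.2.1) - φ (iterRM f q.1 n q.2.2)) ∂ℙ.prod κ)
      atTop (𝓝 0) := by
  have hφ : UniformContinuous φ := CompactSpace.uniformContinuous_of_continuous φ.continuous
  rw [← integral_zero ((ℕ → T) × (X × X)) ℝ]
  refine tendsto_integral_of_dominated_convergence (fun _ => 2 * ‖φ‖)
    (fun n => Measurable.aestronglyMeasurable (by fun_prop)) (integrable_const _)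
    (fun n => .of_forall fun q => ?_) ?_
  · exact (norm_sub_le _ _).trans ((add_le_add (φ.norm_coe_le_norm _)
      (φ.norm_coe_le_norm _)).trans_eq (two_mul _).symm)
  · filter_upwards [ae_prod_tendsto_dist_iterRM hfmeas hsync] with q hq
    rw [tendsto_zero_iff_norm_tendsto_zero]
    simpa only [Function.comp_apply, dist_eq_norm] using
      tendsto_uniformity_iff_dist_tendsto_zero.1 (Tendsto.comp hφ
        (tendsto_uniformity_iff_dist_tendsto_zero
          (f := fun n => (iterRM f q.1 n q.2.1, iterRM f q.1 n q.2.2)) |>.2 hq))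

end synchronizing

/-- Synchronization implies unique ergodicity: if `f` is a random map on a compact metric
space, driven by a Bernoulli product measure `ℙ = p^ℕ`, such that for all `x, y` the
distance `d(f_ω^n x, f_ω^n y) → 0` for `ℙ`-a.e. `ω`, then `f` admits at most one
stationary probability measure. -/
theorem synchronizing_implies_unique_stationary
    {T : Type*} [MeasurableSpace T]
    {X : Type*} [MetricSpace X] [CompactSpace X] [MeasurableSpace X] [BorelSpace X]
    (p : MeasureTheory.Measure T) [IsProbabilityMeasure p]
    (ℙ : MeasureTheory.Measure (ℕ → T)) [IsProbabilityMeasure ℙ]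
    (hbern : MeasureTheory.Measure.map (fun ω => (ω 0, fun n => ω (n + 1))) ℙ
      = p.prod ℙ)
    (f : T → X → X) (hf : ∀ t, Continuous (f t))
    (hfmeas : Measurable (Function.uncurry f))
    (hsync : ∀ x y : X, ∀ᵐ ω ∂ℙ,
      Tendsto (fun n => dist (iterRM f ω n x) (iterRM f ω n y)) atTop (nhds 0))
    (μ ν : MeasureTheory.Measure X) [IsProbabilityMeasure μ] [IsProbabilityMeasure ν]
    (hμ : ∀ φ : C(X, ℝ), ∫ ω, ∫ x, φ (f (ω 0) x) ∂μ ∂ℙ = ∫ x, φ x ∂μ)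
    (hν : ∀ φ : C(X, ℝ), ∫ ω, ∫ x, φ (f (ω 0) x) ∂ν ∂ℙ = ∫ x, φ x ∂ν) :
    μ = ν := by
  refine ext_of_forall_integral_eq_of_IsFiniteMeasure (μ := μ) (ν := ν) fun φ => ?_
  have hconst := integral_prod_sub_iterRM_of_stationary hbern hf hfmeas hμ hν φ.toContinuousMap
  have hlim := tendsto_integral_prod_sub_iterRM (κ := μ.prod ν) hfmeas hsync φ.toContinuousMap
  simp only [hconst] at hlim
  exact sub_eq_zero.1 (tendsto_nhds_unique tendsto_const_nhds hlim)
end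

section
/- Suppose a random map f : Ω × X → X on a compact metric space is contracting on average: there exist n ≥ 1, 0 < α ≤ 1 and q < 1 with ∫ d(f_ω^n(x), f_ω^n(y))^α dℙ(ω) ≤ q·d(x,y)^α for all x,y, and suppose ∫ Lip(f_ω)^β dℙ < ∞ for some β ≥ 2^{n-1}α. Then f is synchronizing: for all x,y ∈ X, d(f_ω^k(x), f_ω^k(y)) → 0 as k → ∞ for ℙ-almost every ω. -/
open MeasureTheory Filter

lemma iterRM_add {T X : Type*} (f : T → X → X) (ω : ℕ → T) (k m : ℕ) (x : X) :
    iterRM f ω (k + m) x = iterRM f (fun i => ω (i + k)) m (iterRM f ω k x) := by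
  induction m with
  | zero => rfl
  | succ m ih =>
      show f (ω (k + m)) (iterRM f ω (k + m) x)
        = f (ω (m + k)) (iterRM f (fun i => ω (i + k)) m (iterRM f ω k x))
      rw [ih, Nat.add_comm k m]

lemma measurable_iterRM {T X : Type*} [MeasurableSpace T] [MeasurableSpace X]
    {f : T → X → X} (hf : Measurable (Function.uncurry f)) (k : ℕ) :
    Measurable (fun z : (ℕ → T) × X => iterRM f z.1 k z.2) := by
  induction k with
  | zero => exact measurable_snd
  | succ k ih =>
      have h : (fun z : (ℕ → T) × X => iterRM f z.1 (k + 1) z.2)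
          = fun z => Function.uncurry f (z.1 k, iterRM f z.1 k z.2) := rfl
      rw [h]
      exact hf.comp (((measurable_pi_apply k).comp measurable_fst).prodMk ih)

/-- Key independence lemma: since `iterRM f ω k` depends only on the first `k`
coordinates of `ω`, and the shifted tail is an independent copy of `ℙ`, we can
integrate the tail out separately. -/
lemma iterRM_shift_lintegral {T : Type*} [MeasurableSpace T]
    {X : Type*} [MeasurableSpace X]
    (p : MeasureTheory.Measure T) [IsProbabilityMeasure p]
    (ℙ : MeasureTheory.Measure (ℕ → T)) [IsProbabilityMeasure ℙ]
    (hbern : MeasureTheory.Measure.map (fun ω => (ω 0, fun n => ω (n + 1))) ℙ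
      = p.prod ℙ)
    (f : T → X → X) (hfmeas : Measurable (Function.uncurry f))
    (Φ : X → X → (ℕ → T) → ENNReal)
    (hΦ : Measurable fun z : (X × X) × (ℕ → T) => Φ z.1.1 z.1.2 z.2) :
    ∀ (k : ℕ) (u v : X),
      ∫⁻ ω, Φ (iterRM f ω k u) (iterRM f ω k v) (fun i => ω (i + k)) ∂ℙ
        = ∫⁻ ω, ∫⁻ ω', Φ (iterRM f ω k u) (iterRM f ω k v) ω' ∂ℙ ∂ℙ := by
  have hpair : Measurable (fun ω : ℕ → T => (ω 0, fun n => ω (n + 1))) :=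
    (measurable_pi_apply 0).prodMk
      (measurable_pi_lambda _ fun n => measurable_pi_apply (n + 1))
  have hshift : ∀ k : ℕ, Measurable (fun ω : ℕ → T => (fun i => ω (i + k) : ℕ → T)) :=
    fun k => measurable_pi_lambda _ fun i => measurable_pi_apply (i + k)
  -- measurability of `ψ a b := ∫⁻ ω', Φ a b ω' ∂ℙ`
  have hψ : Measurable (fun ab : X × X => ∫⁻ ω', Φ ab.1 ab.2 ω' ∂ℙ) :=
    Measurable.lintegral_prod_right' (f := fun z : (X × X) × (ℕ → T) => Φ z.1.1 z.1.2 z.2) hΦ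
  intro k
  induction k with
  | zero =>
      intro u v
      have h0 : (fun ω : ℕ → T => Φ (iterRM f ω 0 u) (iterRM f ω 0 v) (fun i => ω (i + 0)))
          = fun ω => Φ u v ω := rfl
      have h1 : (fun ω : ℕ → T => ∫⁻ ω', Φ (iterRM f ω 0 u) (iterRM f ω 0 v) ω' ∂ℙ)
          = fun _ => ∫⁻ ω', Φ u v ω' ∂ℙ := rfl
      rw [h0, h1, lintegral_const, measure_univ, mul_one]
  | succ k ih =>
      intro u v
      have hiter : ∀ (ω : ℕ → T) (z : X),
          iterRM f ω (k + 1) z = iterRM f (fun i => ω (i + 1)) k (f (ω 0) z) := by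
        intro ω z
        have h := iterRM_add f ω 1 k z
        rw [Nat.add_comm 1 k] at h
        exact h
      -- the function of (head, tail)
      set G : T × (ℕ → T) → ENNReal := fun z =>
        Φ (iterRM f z.2 k (f z.1 u)) (iterRM f z.2 k (f z.1 v)) (fun i => z.2 (i + k))
        with hG_def
      have hmeasG : Measurable G := by
        have hGeq : G = (fun z : (X × X) × (ℕ → T) => Φ z.1.1 z.1.2 z.2) ∘
            (fun z : T × (ℕ → T) =>
              ((iterRM f z.2 k (f z.1 u), iterRM f z.2 k (f z.1 v)), fun i => z.2 (i + k))) := rfl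
        rw [hGeq]
        apply hΦ.comp
        refine Measurable.prodMk (Measurable.prodMk ?_ ?_) ((hshift k).comp measurable_snd)
        · exact (measurable_iterRM hfmeas k).comp
            (measurable_snd.prodMk (hfmeas.comp
              (measurable_fst.prodMk (measurable_const : Measurable fun _ : T × (ℕ → T) => u))))
        · exact (measurable_iterRM hfmeas k).comp
            (measurable_snd.prodMk (hfmeas.comp
              (measurable_fst.prodMk (measurable_const : Measurable fun _ : T × (ℕ → T) => v))))
      set G' : T × (ℕ → T) → ENNReal := fun z =>
        ∫⁻ ω', Φ (iterRM f z.2 k (f z.1 u)) (iterRM f z.2 k (f z.1 v)) ω' ∂ℙ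
        with hG'_def
      have hmeasG' : Measurable G' := by
        have hGeq' : G' = (fun ab : X × X => ∫⁻ ω', Φ ab.1 ab.2 ω' ∂ℙ) ∘
            (fun z : T × (ℕ → T) =>
              (iterRM f z.2 k (f z.1 u), iterRM f z.2 k (f z.1 v))) := rfl
        rw [hGeq']
        apply hψ.comp
        refine Measurable.prodMk ?_ ?_
        · exact (measurable_iterRM hfmeas k).comp
            (measurable_snd.prodMk (hfmeas.comp
              (measurable_fst.prodMk (measurable_const : Measurable fun _ : T × (ℕ → T) => u))))
        · exact (measurable_iterRM hfmeas k).comp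
            (measurable_snd.prodMk (hfmeas.comp
              (measurable_fst.prodMk (measurable_const : Measurable fun _ : T × (ℕ → T) => v))))
      have hL : (fun ω : ℕ → T =>
            Φ (iterRM f ω (k + 1) u) (iterRM f ω (k + 1) v) (fun i => ω (i + (k + 1))))
          = fun ω => G (ω 0, fun n => ω (n + 1)) := by
        funext ω
        simp only [hG_def, hiter]
        rfl
      have hR : (fun ω : ℕ → T =>
            ∫⁻ ω', Φ (iterRM f ω (k + 1) u) (iterRM f ω (k + 1) v) ω' ∂ℙ)
          = fun ω => G' (ω 0, fun n => ω (n + 1)) := by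
        funext ω
        simp only [hG'_def, hiter]
      rw [hL, hR]
      rw [← lintegral_map hmeasG hpair, ← lintegral_map hmeasG' hpair, hbern]
      rw [lintegral_prod _ hmeasG.aemeasurable, lintegral_prod _ hmeasG'.aemeasurable]
      refine lintegral_congr fun t => ?_
      exact ih (f t u) (f t v)

/-- A random map (driven by a Bernoulli measure `ℙ = p^ℕ`) that is contracting on
average, with an integrable `β`-moment of the Lipschitz constants for some
`β ≥ 2^(n-1)·α`, is synchronizing: for all `x, y`,
`d(f_ω^k x, f_ω^k y) → 0` as `k → ∞` for `ℙ`-a.e. `ω`. -/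
theorem contracting_on_average_implies_synchronizing
    {T : Type*} [MeasurableSpace T]
    {X : Type*} [MetricSpace X] [CompactSpace X] [MeasurableSpace X] [BorelSpace X]
    (p : MeasureTheory.Measure T) [IsProbabilityMeasure p]
    (ℙ : MeasureTheory.Measure (ℕ → T)) [IsProbabilityMeasure ℙ]
    (hbern : MeasureTheory.Measure.map (fun ω => (ω 0, fun n => ω (n + 1))) ℙ
      = p.prod ℙ)
    (f : T → X → X) (hfmeas : Measurable (Function.uncurry f))
    (K : T → NNReal) (hK : ∀ t, LipschitzWith (K t) (f t))
    (n : ℕ) (hn : 1 ≤ n) (α : ℝ) (hα0 : 0 < α) (hα1 : α ≤ 1) (q : ℝ) (hq : q < 1)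
    (hcontr : ∀ x y : X,
      ∫⁻ ω, ENNReal.ofReal (dist (iterRM f ω n x) (iterRM f ω n y) ^ α) ∂ℙ
        ≤ ENNReal.ofReal (q * dist x y ^ α))
    (β : ℝ) (hβ : 2 ^ (n - 1) * α ≤ β)
    (hmom : ∫⁻ ω, ((K (ω 0) : ENNReal)) ^ β ∂ℙ < ⊤) :
    ∀ x y : X, ∀ᵐ ω ∂ℙ,
      Tendsto (fun k => dist (iterRM f ω k x) (iterRM f ω k y)) atTop (nhds 0) := by
  intro x y
  -- the sequence of (α-moments of) separations
  set g : ℕ → (ℕ → T) → ENNReal := fun k ω =>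
    ENNReal.ofReal (dist (iterRM f ω k x) (iterRM f ω k y) ^ α) with hg_def
  have hmeas_iter : ∀ (k : ℕ) (z : X), Measurable (fun ω : ℕ → T => iterRM f ω k z) :=
    fun k z => (measurable_iterRM hfmeas k).comp
      (measurable_id.prodMk measurable_const)
  have hmeasg : ∀ k, Measurable (g k) := by
    intro k
    apply ENNReal.measurable_ofReal.comp
    exact ((Real.continuous_rpow_const hα0.le).measurable).comp
      ((hmeas_iter k x).dist (hmeas_iter k y))
  -- the integrand as a function of two points and a tail
  set Φ : X → X → (ℕ → T) → ENNReal := fun a b ω' =>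
    ENNReal.ofReal (dist (iterRM f ω' n a) (iterRM f ω' n b) ^ α) with hΦ_def
  have hΦmeas : Measurable fun z : (X × X) × (ℕ → T) => Φ z.1.1 z.1.2 z.2 := by
    apply ENNReal.measurable_ofReal.comp
    apply ((Real.continuous_rpow_const hα0.le).measurable).comp
    exact Measurable.dist
      ((measurable_iterRM hfmeas n).comp (measurable_snd.prodMk (measurable_fst.comp measurable_fst)))
      ((measurable_iterRM hfmeas n).comp (measurable_snd.prodMk (measurable_snd.comp measurable_fst)))
  -- one contraction step
  have hstep : ∀ k : ℕ, ∫⁻ ω, g (k + n) ω ∂ℙ ≤ ENNReal.ofReal q * ∫⁻ ω, g k ω ∂ℙ := by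
    intro k
    have hdecomp : (fun ω => g (k + n) ω)
        = fun ω => Φ (iterRM f ω k x) (iterRM f ω k y) (fun i => ω (i + k)) := by
      funext ω
      simp only [hg_def, hΦ_def, iterRM_add f ω k n]
    rw [hdecomp,
      iterRM_shift_lintegral p ℙ hbern f hfmeas Φ hΦmeas k x y]
    have hpt : ∀ ω : ℕ → T,
        ∫⁻ ω', Φ (iterRM f ω k x) (iterRM f ω k y) ω' ∂ℙ
          ≤ ENNReal.ofReal q * g k ω := by
      intro ω
      refine le_trans (hcontr (iterRM f ω k x) (iterRM f ω k y)) ?_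
      rcases le_or_gt 0 q with hq0 | hq0
      · rw [ENNReal.ofReal_mul hq0]
      · have : q * dist (iterRM f ω k x) (iterRM f ω k y) ^ α ≤ 0 :=
          mul_nonpos_of_nonpos_of_nonneg hq0.le (Real.rpow_nonneg dist_nonneg α)
        rw [ENNReal.ofReal_eq_zero.mpr this]
        exact zero_le
    calc ∫⁻ ω, ∫⁻ ω', Φ (iterRM f ω k x) (iterRM f ω k y) ω' ∂ℙ ∂ℙ
        ≤ ∫⁻ ω, ENNReal.ofReal q * g k ω ∂ℙ := lintegral_mono hpt
      _ = ENNReal.ofReal q * ∫⁻ ω, g k ω ∂ℙ := lintegral_const_mul _ (hmeasg k)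
  -- uniform bound from compactness
  set D : ENNReal := ENNReal.ofReal (Metric.diam (Set.univ : Set X) ^ α) with hD_def
  have hbound : ∀ k, ∫⁻ ω, g k ω ∂ℙ ≤ D := by
    intro k
    have : ∀ ω, g k ω ≤ D := by
      intro ω
      apply ENNReal.ofReal_le_ofReal
      exact Real.rpow_le_rpow dist_nonneg
        (Metric.dist_le_diam_of_mem Metric.isBounded_of_compactSpace
          (Set.mem_univ _) (Set.mem_univ _)) hα0.le
    calc ∫⁻ ω, g k ω ∂ℙ ≤ ∫⁻ _, D ∂ℙ := lintegral_mono this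
      _ = D := by rw [lintegral_const, measure_univ, mul_one]
  set Q : ENNReal := ENNReal.ofReal q with hQ_def
  have hQ1 : Q < 1 := by
    rw [hQ_def, ← ENNReal.ofReal_one]
    rcases le_or_gt q 0 with h0 | h0
    · calc ENNReal.ofReal q = 0 := ENNReal.ofReal_eq_zero.mpr h0
        _ < ENNReal.ofReal 1 := by simp
    · exact (ENNReal.ofReal_lt_ofReal_iff one_pos).mpr hq
  have hDlt : D ≠ ⊤ := ENNReal.ofReal_ne_top
  -- geometric decay along blocks of length n
  have hgeo : ∀ (m r : ℕ), ∫⁻ ω, g (r + m * n) ω ∂ℙ ≤ Q ^ m * D := by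
    intro m
    induction m with
    | zero => intro r; simpa using hbound r
    | succ m ih =>
        intro r
        have heq : r + (m + 1) * n = (r + m * n) + n := by ring
        rw [heq]
        calc ∫⁻ ω, g ((r + m * n) + n) ω ∂ℙ
            ≤ Q * ∫⁻ ω, g (r + m * n) ω ∂ℙ := hstep (r + m * n)
          _ ≤ Q * (Q ^ m * D) := mul_le_mul_right (ih r) Q
          _ = Q ^ (m + 1) * D := by ring
  have hbd : ∀ k : ℕ, ∫⁻ ω, g k ω ∂ℙ ≤ Q ^ (k / n) * D := by
    intro k
    have := hgeo (k / n) (k % n)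
    rwa [Nat.mod_add_div' k n] at this
  haveI : NeZero n := ⟨Nat.one_le_iff_ne_zero.mp hn⟩
  -- summability of the integrals
  have hsum : ∑' k : ℕ, ∫⁻ ω, g k ω ∂ℙ ≠ ⊤ := by
    have h1 : ∑' k : ℕ, ∫⁻ ω, g k ω ∂ℙ ≤ ∑' k : ℕ, Q ^ (k / n) * D :=
      ENNReal.tsum_le_tsum hbd
    have h2 : ∑' k : ℕ, Q ^ (k / n) * D = (∑' k : ℕ, Q ^ (k / n)) * D :=
      ENNReal.tsum_mul_right
    have h3 : ∑' k : ℕ, Q ^ (k / n) = ∑' z : ℕ × Fin n, Q ^ z.1 := by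
      rw [← Equiv.tsum_eq ((Nat.divModEquiv n).symm) (fun k : ℕ => Q ^ (k / n))]
      refine tsum_congr fun z => ?_
      have hz : (((Nat.divModEquiv n).symm z : ℕ)) / n = z.1 := by
        have : ((Nat.divModEquiv n) ((Nat.divModEquiv n).symm z)) = z :=
          (Nat.divModEquiv n).apply_symm_apply z
        have h := congrArg Prod.fst this
        simpa [Nat.divModEquiv] using h
      rw [hz]
    have h4 : ∑' z : ℕ × Fin n, Q ^ z.1 = ∑' m : ℕ, ∑' _ : Fin n, Q ^ m :=
      ENNReal.tsum_prod (f := fun m (_ : Fin n) => Q ^ m)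
    have h5 : ∑' m : ℕ, ∑' _ : Fin n, Q ^ m = (n : ENNReal) * ∑' m : ℕ, Q ^ m := by
      rw [← ENNReal.tsum_mul_left]
      refine tsum_congr fun m => ?_
      simp [tsum_fintype, Finset.sum_const, nsmul_eq_mul, mul_comm]
    have h6 : ∑' m : ℕ, Q ^ m = (1 - Q)⁻¹ := ENNReal.tsum_geometric Q
    have h7 : (1 - Q)⁻¹ ≠ ⊤ := by
      rw [Ne, ENNReal.inv_eq_top, tsub_eq_zero_iff_le]
      exact not_le.mpr hQ1
    refine ne_top_of_le_ne_top ?_ (h1.trans_eq h2)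
    rw [h3, h4, h5, h6]
    exact ENNReal.mul_ne_top (ENNReal.mul_ne_top (by simp) h7) hDlt
  -- a.e. summability, hence a.e. convergence to zero
  have hintsum : ∫⁻ ω, ∑' k : ℕ, g k ω ∂ℙ ≠ ⊤ := by
    rw [lintegral_tsum fun k => (hmeasg k).aemeasurable]
    exact hsum
  have hae : ∀ᵐ ω ∂ℙ, ∑' k : ℕ, g k ω < ⊤ :=
    ae_lt_top (Measurable.ennreal_tsum hmeasg) hintsum
  filter_upwards [hae] with ω hω
  have hg0 : Tendsto (fun k => g k ω) atTop (nhds 0) :=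
    ENNReal.tendsto_atTop_zero_of_tsum_ne_top hω.ne
  -- convert back to the real distances
  have ha : Tendsto (fun k => dist (iterRM f ω k x) (iterRM f ω k y) ^ α) atTop (nhds 0) := by
    have ht : Tendsto (fun k => (g k ω).toReal) atTop (nhds (ENNReal.toReal 0)) :=
      (ENNReal.tendsto_toReal (by simp)).comp hg0
    simp only [ENNReal.toReal_zero] at ht
    have heq : ∀ k, (g k ω).toReal = dist (iterRM f ω k x) (iterRM f ω k y) ^ α := by
      intro k
      simp only [hg_def]
      exact ENNReal.toReal_ofReal (Real.rpow_nonneg dist_nonneg α)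
    simpa only [heq] using ht
  have hconv : Tendsto (fun k =>
      (dist (iterRM f ω k x) (iterRM f ω k y) ^ α) ^ α⁻¹) atTop (nhds (0 ^ α⁻¹ : ℝ)) :=
    ((Real.continuousAt_rpow_const 0 α⁻¹ (Or.inr (inv_nonneg.mpr hα0.le))).tendsto).comp ha
  have hzero : (0 : ℝ) ^ α⁻¹ = 0 := Real.zero_rpow (inv_ne_zero hα0.ne')
  rw [hzero] at hconv
  have hre : ∀ k, (dist (iterRM f ω k x) (iterRM f ω k y) ^ α) ^ α⁻¹
      = dist (iterRM f ω k x) (iterRM f ω k y) := by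
    intro k
    rw [← Real.rpow_mul dist_nonneg, mul_inv_cancel₀ hα0.ne', Real.rpow_one]
  simpa only [hre] using hconv
end

section
/- Let P be a Markov operator associated with a continuous random map f on a compact X, and let F ⊆ X be a minimal closed f-invariant set. If φ ∈ C(X) satisfies Pφ = φ, then φ is constant on F. -/
/-!
Let `m` be the minimum of `φ` on `F`. Since `φ(x) = 𝔼 φ(f_ω x)` and `φ(f_ω x) ≥ m` almost surely
for `x ∈ F`, every point of the level set `F ∩ {φ = m}` is almost surely mapped into it. By
continuity of the `f_ω` and separability it suffices to test countably many points, so this level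
set is a nonempty closed invariant subset of `F`; by minimality it is all of `F`.
-/

open MeasureTheory Filter Set TopologicalSpace

section RandomMaps

variable {Ω X : Type*} [MeasurableSpace Ω] [TopologicalSpace X] {μ : Measure Ω}

theorem ae_mapsTo_of_forall_ae_mem [PseudoMetrizableSpace X] {Y : Type*} [TopologicalSpace Y]
    {g : Ω → X → Y} (hg : ∀ ω, Continuous (g ω)) {S : Set X}
    (hS : IsSeparable S) {C : Set Y} (hC : IsClosed C)
    (h : ∀ x ∈ S, ∀ᵐ ω ∂μ, g ω x ∈ C) : ∀ᵐ ω ∂μ, MapsTo (g ω) S C := by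
  obtain ⟨D, hDS, hDc, hSD⟩ := hS.exists_countable_dense_subset
  filter_upwards [(ae_ball_iff hDc).2 fun x hx => h x (hDS hx)] with ω hω
  exact fun x hx => (hC.preimage (hg ω)).closure_subset_iff.2 hω (hSD hx)

theorem ae_eq_const_of_ae_le_of_integral_eq [IsProbabilityMeasure μ] {h : Ω → ℝ}
    (hint : Integrable h μ) {c : ℝ} (hle : (fun _ => c) ≤ᵐ[μ] h) (heq : ∫ ω, h ω ∂μ = c) :
    h =ᵐ[μ] fun _ => c :=
  ((integral_eq_iff_of_ae_le (integrable_const c) hint hle).1 (by simp [heq])).symm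

variable [CompactSpace X] [MeasurableSpace X] [OpensMeasurableSpace X] [IsProbabilityMeasure μ]
  {g : Ω → X → X} {φ : C(X, ℝ)}

theorem integrable_comp_apply (hgm : ∀ x, Measurable fun ω => g ω x) (x : X) :
    Integrable (fun ω => φ (g ω x)) μ :=
  Integrable.of_bound (φ.continuous.measurable.comp (hgm x)).aestronglyMeasurable ‖φ‖
    (Eventually.of_forall fun _ => φ.norm_coe_le_norm _)

theorem ae_mem_inter_preimage_of_le (hgm : ∀ x, Measurable fun ω => g ω x)
    (hφ : ∀ x, ∫ ω, φ (g ω x) ∂μ = φ x) {F : Set X} (hF : ∀ᵐ ω ∂μ, MapsTo (g ω) F F) {m : ℝ}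
    (hm : ∀ y ∈ F, m ≤ φ y) {x : X} (hx : x ∈ F ∩ φ ⁻¹' {m}) :
    ∀ᵐ ω ∂μ, g ω x ∈ F ∩ φ ⁻¹' {m} := by
  have hxF : ∀ᵐ ω ∂μ, g ω x ∈ F := hF.mono fun ω hω => hω hx.1
  have hlevel : (fun ω => φ (g ω x)) =ᵐ[μ] fun _ => m :=
    ae_eq_const_of_ae_le_of_integral_eq (integrable_comp_apply hgm x)
      (hxF.mono fun ω hω => hm _ hω) ((hφ x).trans hx.2)
  filter_upwards [hxF, hlevel] with ω hωF hωm
  exact ⟨hωF, hωm⟩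

theorem ae_mapsTo_inter_preimage_of_le [PseudoMetrizableSpace X]
    (hg : ∀ ω, Continuous (g ω)) (hgm : ∀ x, Measurable fun ω => g ω x)
    (hφ : ∀ x, ∫ ω, φ (g ω x) ∂μ = φ x) {F : Set X} (hFclosed : IsClosed F)
    (hF : ∀ᵐ ω ∂μ, MapsTo (g ω) F F) {m : ℝ} (hm : ∀ y ∈ F, m ≤ φ y) :
    ∀ᵐ ω ∂μ, MapsTo (g ω) (F ∩ φ ⁻¹' {m}) (F ∩ φ ⁻¹' {m}) :=
  ae_mapsTo_of_forall_ae_mem hg (.of_separableSpace _)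
    (hFclosed.inter (isClosed_singleton.preimage φ.continuous))
    fun _ hx => ae_mem_inter_preimage_of_le hgm hφ hF hm hx

end RandomMaps

theorem markov_fixed_function_constant_on_minimal_general
    {T : Type*} [MeasurableSpace T]
    {X : Type*} [MetricSpace X] [CompactSpace X] [MeasurableSpace X] [BorelSpace X]
    (ℙ : MeasureTheory.Measure (ℕ → T)) [IsProbabilityMeasure ℙ]
    (f : T → X → X) (hf : ∀ t, Continuous (f t))
    (hfmeas : Measurable (Function.uncurry f))
    (F : Set X) (hFclosed : IsClosed F) (hFne : F.Nonempty)
    (hFinv : ∀ᵐ ω ∂ℙ, Set.MapsTo (f (ω 0)) F F)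
    (hFmin : ∀ F' ⊆ F, IsClosed F' → F'.Nonempty →
      (∀ᵐ ω ∂ℙ, Set.MapsTo (f (ω 0)) F' F') → F' = F)
    (φ : C(X, ℝ)) (hφ : ∀ x : X, ∫ ω, φ (f (ω 0) x) ∂ℙ = φ x) :
    ∀ x ∈ F, ∀ y ∈ F, φ x = φ y := by
  obtain ⟨x₀, hx₀, hmin⟩ := hFclosed.isCompact.exists_isMinOn hFne φ.continuous.continuousOn
  have hmeas (x : X) : Measurable fun ω : ℕ → T => f (ω 0) x :=
    hfmeas.comp (by fun_prop : Measurable fun ω : ℕ → T => (ω 0, x))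
  have hinv : ∀ᵐ ω ∂ℙ, MapsTo (f (ω 0)) (F ∩ φ ⁻¹' {φ x₀}) (F ∩ φ ⁻¹' {φ x₀}) :=
    ae_mapsTo_inter_preimage_of_le (fun ω : ℕ → T => hf (ω 0)) hmeas hφ hFclosed hFinv hmin
  have hlevel : F ∩ φ ⁻¹' {φ x₀} = F := hFmin _ inter_subset_left
    (hFclosed.inter (isClosed_singleton.preimage φ.continuous)) ⟨x₀, hx₀, rfl⟩ hinv
  intro x hx y hy
  rw [← hlevel] at hx hy
  exact hx.2.trans hy.2.symm

/-- If `F` is a minimal closed invariant set of a continuous random map `f` on a compact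
metric space, and `φ ∈ C(X)` satisfies `Pφ = φ` for the annealed Koopman operator
`Pφ(x) = ∫ φ(f_ω x) dℙ(ω)`, then `φ` is constant on `F`. -/
theorem markov_fixed_function_constant_on_minimal
    {T : Type*} [MeasurableSpace T]
    {X : Type*} [MetricSpace X] [CompactSpace X] [MeasurableSpace X] [BorelSpace X]
    (p : MeasureTheory.Measure T) [IsProbabilityMeasure p]
    (ℙ : MeasureTheory.Measure (ℕ → T)) [IsProbabilityMeasure ℙ]
    (hbern : MeasureTheory.Measure.map (fun ω => (ω 0, fun n => ω (n + 1))) ℙ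
      = p.prod ℙ)
    (f : T → X → X) (hf : ∀ t, Continuous (f t))
    (hfmeas : Measurable (Function.uncurry f))
    (F : Set X) (hFclosed : IsClosed F) (hFne : F.Nonempty)
    (hFinv : ∀ᵐ ω ∂ℙ, Set.MapsTo (f (ω 0)) F F)
    (hFmin : ∀ F' ⊆ F, IsClosed F' → F'.Nonempty →
      (∀ᵐ ω ∂ℙ, Set.MapsTo (f (ω 0)) F' F') → F' = F)
    (φ : C(X, ℝ)) (hφ : ∀ x : X, ∫ ω, φ (f (ω 0) x) ∂ℙ = φ x) :
    ∀ x ∈ F, ∀ y ∈ F, φ x = φ y :=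
  markov_fixed_function_constant_on_minimal_general ℙ f hf hfmeas F hFclosed hFne hFinv hFmin φ hφ
end

section
/- Let P be the annealed Koopman operator of a continuous random map f on a compact metric space X, and let φ ∈ C(X) satisfy Pφ = ρφ with |ρ| = 1. If φ vanishes on every minimal closed f-invariant subset of X, then φ ≡ 0. -/
open MeasureTheory Filter

/-- If `φ ∈ C(X, ℂ)` satisfies `Pφ = ρ φ` with `|ρ| = 1` for the annealed Koopman
operator of a continuous random map on a compact metric space, and `φ` vanishes on
every minimal closed invariant subset, then `φ ≡ 0`. -/
theorem unimodular_eigenfunction_vanishing_on_minimals_is_zero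
    {T : Type*} [MeasurableSpace T]
    {X : Type*} [MetricSpace X] [CompactSpace X] [MeasurableSpace X] [BorelSpace X]
    (p : MeasureTheory.Measure T) [IsProbabilityMeasure p]
    (ℙ : MeasureTheory.Measure (ℕ → T)) [IsProbabilityMeasure ℙ]
    (hbern : MeasureTheory.Measure.map (fun ω => (ω 0, fun n => ω (n + 1))) ℙ
      = p.prod ℙ)
    (f : T → X → X) (hf : ∀ t, Continuous (f t))
    (hfmeas : Measurable (Function.uncurry f))
    (φ : C(X, ℂ)) (ρ : ℂ) (hρ : ‖ρ‖ = 1)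
    (heig : ∀ x : X, ∫ ω, φ (f (ω 0) x) ∂ℙ = ρ * φ x)
    (hvanish : ∀ F : Set X, IsClosed F → F.Nonempty →
      (∀ᵐ ω ∂ℙ, Set.MapsTo (f (ω 0)) F F) →
      (∀ F' ⊆ F, IsClosed F' → F'.Nonempty →
        (∀ᵐ ω ∂ℙ, Set.MapsTo (f (ω 0)) F' F') → F' = F) →
      ∀ x ∈ F, φ x = 0) :
    ∀ x : X, φ x = 0 := by
  intro x
  by_contra hne
  haveI : Nonempty X := ⟨x⟩
  obtain ⟨x₀, -, hx₀⟩ := isCompact_univ.exists_isMaxOn Set.univ_nonempty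
    ((continuous_norm.comp φ.continuous).continuousOn (s := Set.univ))
  have hx₀' : ∀ y, ‖φ y‖ ≤ ‖φ x₀‖ := fun y => hx₀ (Set.mem_univ y)
  set M : ℝ := ‖φ x₀‖ with hM
  have hMpos : 0 < M := lt_of_lt_of_le (by simpa using hne) (hx₀' x)
  set K : Set X := {y | ‖φ y‖ = M} with hKdef
  have hKc : IsClosed K := isClosed_eq (continuous_norm.comp φ.continuous) continuous_const
  have hx₀K : x₀ ∈ K := rfl
  -- measurability / integrability
  have hmeas : ∀ y : X, Measurable fun ω : ℕ → T => φ (f (ω 0) y) := fun y =>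
    φ.continuous.measurable.comp
      ((hfmeas.comp (measurable_id.prodMk measurable_const)).comp (measurable_pi_apply 0))
  have hbound : ∀ (y : X) (ω : ℕ → T), ‖φ (f (ω 0) y)‖ ≤ M := fun y ω => by
    exact hx₀' _
  have hint : ∀ y : X, Integrable (fun ω => φ (f (ω 0) y)) ℙ := fun y =>
    (integrable_const M).mono' (hmeas y).aestronglyMeasurable (Eventually.of_forall (hbound y))
  -- Step A: pointwise a.e. invariance of K
  have key : ∀ y ∈ K, ∀ᵐ ω ∂ℙ, f (ω 0) y ∈ K := by
    intro y hy
    have h1 : ∫ ω, ‖φ (f (ω 0) y)‖ ∂ℙ = M := by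
      refine le_antisymm ?_ ?_
      · calc ∫ ω, ‖φ (f (ω 0) y)‖ ∂ℙ ≤ ∫ _ω, M ∂ℙ :=
              integral_mono (hint y).norm (integrable_const M) (hbound y)
          _ = M := by simp
      · have h2 := norm_integral_le_integral_norm (μ := ℙ) (fun ω => φ (f (ω 0) y))
        rw [heig y] at h2
        calc M = ‖ρ * φ y‖ := by
              rw [norm_mul, hρ, one_mul]
              exact hy.symm
          _ ≤ _ := h2
    have h0 : ∫ ω, (M - ‖φ (f (ω 0) y)‖) ∂ℙ = 0 := by
      rw [integral_sub (integrable_const M) (hint y).norm, h1, integral_const]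
      simp
    have hnn : 0 ≤ᵐ[ℙ] fun ω => M - ‖φ (f (ω 0) y)‖ :=
      Eventually.of_forall fun ω => sub_nonneg.2 (hbound y ω)
    have := (integral_eq_zero_iff_of_nonneg_ae hnn
      ((integrable_const M).sub (hint y).norm)).1 h0
    filter_upwards [this] with ω hω
    have : ‖φ (f (ω 0) y)‖ = M := by
      have := sub_eq_zero.1 hω
      linarith [this]
    simpa [hKdef] using this.symm ▸ rfl
  -- upgrade pointwise a.e. invariance to uniform a.e. invariance, for closed subsets of K
  have upgrade : ∀ F : Set X, IsClosed F → (∀ y ∈ F, ∀ᵐ ω ∂ℙ, f (ω 0) y ∈ F) →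
      ∀ᵐ ω ∂ℙ, Set.MapsTo (f (ω 0)) F F := by
    intro F hFc hFp
    haveI : TopologicalSpace.SeparableSpace F := inferInstance
    obtain ⟨d, hdc, hdd⟩ := TopologicalSpace.exists_countable_dense F
    have hae : ∀ᵐ ω ∂ℙ, ∀ y ∈ Subtype.val '' d, f (ω 0) y ∈ F :=
      (ae_ball_iff (hdc.image _)).2 fun y hy => hFp y (by
        obtain ⟨z, -, rfl⟩ := hy; exact z.2)
    filter_upwards [hae] with ω hω
    intro y hy
    have hyD : y ∈ closure (Subtype.val '' d) := by
      have : (⟨y, hy⟩ : F) ∈ closure d := hdd _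
      rwa [closure_subtype] at this
    have h1 : f (ω 0) y ∈ closure (f (ω 0) '' (Subtype.val '' d)) :=
      image_closure_subset_closure_image (hf (ω 0)) ⟨y, hyD, rfl⟩
    have h2 : f (ω 0) '' (Subtype.val '' d) ⊆ F := by
      rintro - ⟨z, hz, rfl⟩; exact hω z hz
    exact hFc.closure_subset_iff.2 h2 h1
  have hKinv : ∀ᵐ ω ∂ℙ, Set.MapsTo (f (ω 0)) K K := upgrade K hKc key
  -- Zorn
  set S : Set (Set X) :=
    {F | F ⊆ K ∧ IsClosed F ∧ F.Nonempty ∧ ∀ᵐ ω ∂ℙ, Set.MapsTo (f (ω 0)) F F} with hSdef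
  have hchain : ∀ c ⊆ S, IsChain (· ⊆ ·) c → c.Nonempty → ∃ lb ∈ S, ∀ s ∈ c, lb ⊆ s := by
    intro c hcS hc hcne
    haveI : Nonempty c := hcne.to_subtype
    -- countable reduction
    obtain ⟨Tc, hTcc, hTsub, hTU⟩ := TopologicalSpace.isOpen_sUnion_countable (compl '' c)
      (by rintro - ⟨F, hF, rfl⟩; exact (hcS hF).2.1.isOpen_compl)
    set c₀ : Set (Set X) := compl '' Tc with hc₀def
    have hc₀c : c₀ ⊆ c := by
      rintro - ⟨U, hU, rfl⟩
      obtain ⟨F, hF, rfl⟩ := hTsub hU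
      simpa using hF
    have hsInter : ⋂₀ c = ⋂₀ c₀ := by
      apply compl_injective
      rw [Set.compl_sInter, Set.compl_sInter, hc₀def, Set.compl_compl_image, hTU]
    have hdir : DirectedOn (· ⊇ ·) c := by
      intro a ha b hb
      rcases hc.total ha hb with h | h
      · exact ⟨a, ha, subset_rfl, h⟩
      · exact ⟨b, hb, h, subset_rfl⟩
    have hne' : (⋂₀ c).Nonempty :=
      IsCompact.nonempty_sInter_of_directed_nonempty_isCompact_isClosed hdir
        (fun F hF => (hcS hF).2.2.1) (fun F hF => (hcS hF).2.1.isCompact)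
        (fun F hF => (hcS hF).2.1)
    obtain ⟨F₁, hF₁⟩ := hcne
    refine ⟨⋂₀ c, ⟨?_, ?_, hne', ?_⟩, fun s hs => Set.sInter_subset_of_mem hs⟩
    · exact (Set.sInter_subset_of_mem hF₁).trans (hcS hF₁).1
    · exact isClosed_sInter fun F hF => (hcS hF).2.1
    · have : ∀ᵐ ω ∂ℙ, ∀ F ∈ c₀, Set.MapsTo (f (ω 0)) F F :=
        (ae_ball_iff (hTcc.image _)).2 fun F hF => (hcS (hc₀c hF)).2.2.2
      filter_upwards [this] with ω hω
      intro y hy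
      rw [hsInter] at hy ⊢
      exact Set.mem_sInter.2 fun F hF => hω F hF (Set.mem_sInter.1 hy F hF)
  obtain ⟨F, -, hFS, hFmin⟩ := zorn_superset_nonempty S hchain K
    ⟨subset_rfl, hKc, ⟨x₀, hx₀K⟩, hKinv⟩
  obtain ⟨hFK, hFc, hFne, hFinv⟩ := hFS
  have hzero := hvanish F hFc hFne hFinv (by
    intro F' hF'F hF'c hF'ne hF'inv
    exact hF'F.antisymm (hFmin ⟨hF'F.trans hFK, hF'c, hF'ne, hF'inv⟩ hF'F))
  obtain ⟨y, hy⟩ := hFne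
  have : M = 0 := by
    have h1 : ‖φ y‖ = M := hFK hy
    rw [hzero y hy] at h1
    simpa using h1.symm
  exact absurd this (ne_of_gt hMpos)
end

section
/- On the projective space P(ℝ^m) with the angular distance d(x̂,ŷ) = ‖x∧y‖ for unit representatives, the projective action of a matrix M ∈ GL(m) satisfies d(Mx̂, Mŷ)/d(x̂,ŷ) ≤ ‖∧²M‖ / (‖Mx‖·‖My‖) for unit vectors x, y with x̂ ≠ ŷ, and consequently the Lipschitz constant of the projective map induced by M is at most ‖M‖²·‖M⁻¹‖². -/
/-!
Write `y = ⟪x, y⟫ • x + w` with `w ⟂ x`. The wedge norm ignores the component of `y` along `x`,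
so `‖x ∧ y‖ = ‖w‖` and `‖Mx ∧ My‖ = ‖Mx ∧ Mw‖ ≤ ‖∧²M‖ ‖w‖`, the last step because `x` and
`w / ‖w‖` are orthonormal. Dividing by `‖Mx‖ ‖My‖` gives the distortion bound; the Lipschitz
bound follows from `‖∧²M‖ ≤ ‖M‖²` and `‖Mx‖⁻¹ ≤ ‖M⁻¹‖` for unit `x`.
-/

open scoped RealInnerProductSpace

/-- The norm of the wedge product `‖x ∧ y‖ = √(‖x‖²‖y‖² − ⟪x,y⟫²)`.  For unit vectors
`x, y` this is the angular distance between the projective classes `x̂, ŷ`. -/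
noncomputable def wedgeNorm {m : ℕ} (x y : EuclideanSpace ℝ (Fin m)) : ℝ :=
  Real.sqrt (‖x‖ ^ 2 * ‖y‖ ^ 2 - ⟪x, y⟫ ^ 2)

/-- The operator norm `‖∧²M‖` of the induced map on the second exterior power:
the supremum of `‖Mu ∧ Mv‖` over orthonormal pairs `u, v`. -/
noncomputable def wedgeOpNorm {m : ℕ}
    (M : EuclideanSpace ℝ (Fin m) →L[ℝ] EuclideanSpace ℝ (Fin m)) : ℝ :=
  sSup {c : ℝ | ∃ u v : EuclideanSpace ℝ (Fin m),
    ‖u‖ = 1 ∧ ‖v‖ = 1 ∧ ⟪u, v⟫ = 0 ∧ c = wedgeNorm (M u) (M v)}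

lemma ContinuousLinearEquiv.inv_norm_apply_le_norm_symm {𝕜 E F : Type*}
    [NontriviallyNormedField 𝕜] [NormedAddCommGroup E] [NormedSpace 𝕜 E] [NormedAddCommGroup F]
    [NormedSpace 𝕜 F]
    (e : E ≃L[𝕜] F) {x : E} (hx : ‖x‖ = 1) : ‖e x‖⁻¹ ≤ ‖(e.symm : F →L[𝕜] E)‖ := by
  have hex : 0 < ‖e x‖ :=
    norm_pos_iff.mpr (e.map_ne_zero_iff.mpr (norm_ne_zero_iff.mp (by simp [hx])))
  rw [inv_le_iff_one_le_mul₀ hex, ← hx]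
  simpa using (e.symm : F →L[𝕜] E).le_opNorm (e x)

namespace wedgeNorm

variable {m : ℕ} {x y : EuclideanSpace ℝ (Fin m)}

lemma nonneg (x y : EuclideanSpace ℝ (Fin m)) : 0 ≤ wedgeNorm x y :=
  Real.sqrt_nonneg _

lemma le_norm_mul_norm (x y : EuclideanSpace ℝ (Fin m)) : wedgeNorm x y ≤ ‖x‖ * ‖y‖ :=
  Real.sqrt_le_iff.mpr ⟨by positivity, by nlinarith [sq_nonneg ⟪x, y⟫]⟩

lemma comm (x y : EuclideanSpace ℝ (Fin m)) : wedgeNorm x y = wedgeNorm y x := by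
  rw [wedgeNorm, wedgeNorm, mul_comm, real_inner_comm]

lemma of_inner_eq_zero (h : ⟪x, y⟫ = 0) : wedgeNorm x y = ‖x‖ * ‖y‖ := by
  rw [wedgeNorm, h, ← mul_pow, zero_pow two_ne_zero, sub_zero, Real.sqrt_sq (by positivity)]

lemma smul_left (r : ℝ) (x y : EuclideanSpace ℝ (Fin m)) :
    wedgeNorm (r • x) y = |r| * wedgeNorm x y := by
  have h : ‖r • x‖ ^ 2 * ‖y‖ ^ 2 - ⟪r • x, y⟫ ^ 2 = r ^ 2 * (‖x‖ ^ 2 * ‖y‖ ^ 2 - ⟪x, y⟫ ^ 2) := by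
    rw [norm_smul, real_inner_smul_left, Real.norm_eq_abs, mul_pow, sq_abs]; ring
  rw [wedgeNorm, wedgeNorm, h, Real.sqrt_mul (sq_nonneg r), Real.sqrt_sq_eq_abs]

lemma smul_right (r : ℝ) (x y : EuclideanSpace ℝ (Fin m)) :
    wedgeNorm x (r • y) = |r| * wedgeNorm x y := by
  rw [comm, smul_left, comm]

lemma smul_add_right (c : ℝ) (x y : EuclideanSpace ℝ (Fin m)) :
    wedgeNorm x (c • x + y) = wedgeNorm x y := by
  have hnorm : ‖c • x + y‖ ^ 2 = c ^ 2 * ‖x‖ ^ 2 + 2 * c * ⟪x, y⟫ + ‖y‖ ^ 2 := by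
    rw [norm_add_sq_real, norm_smul, real_inner_smul_left, Real.norm_eq_abs, mul_pow, sq_abs]
    ring
  have hinner : ⟪x, c • x + y⟫ = c * ‖x‖ ^ 2 + ⟪x, y⟫ := by
    rw [inner_add_right, real_inner_smul_right, real_inner_self_eq_norm_sq]
  rw [wedgeNorm, wedgeNorm, hnorm, hinner]
  ring_nf

end wedgeNorm

section wedgeOpNorm

variable {m : ℕ} (M : EuclideanSpace ℝ (Fin m) →L[ℝ] EuclideanSpace ℝ (Fin m))

lemma wedgeNorm_apply_le_sq_opNorm {u v : EuclideanSpace ℝ (Fin m)} (hu : ‖u‖ = 1)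
    (hv : ‖v‖ = 1) : wedgeNorm (M u) (M v) ≤ ‖M‖ ^ 2 :=
  calc wedgeNorm (M u) (M v) ≤ ‖M u‖ * ‖M v‖ := wedgeNorm.le_norm_mul_norm _ _
    _ ≤ (‖M‖ * ‖u‖) * (‖M‖ * ‖v‖) := by gcongr <;> exact M.le_opNorm _
    _ = ‖M‖ ^ 2 := by rw [hu, hv]; ring

lemma wedgeOpNorm_le_sq_opNorm : wedgeOpNorm M ≤ ‖M‖ ^ 2 :=
  Real.sSup_le (by rintro _ ⟨u, v, hu, hv, -, rfl⟩; exact wedgeNorm_apply_le_sq_opNorm M hu hv)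
    (by positivity)

lemma wedgeNorm_apply_le_wedgeOpNorm {u v : EuclideanSpace ℝ (Fin m)} (hu : ‖u‖ = 1)
    (hv : ‖v‖ = 1) (huv : ⟪u, v⟫ = 0) : wedgeNorm (M u) (M v) ≤ wedgeOpNorm M :=
  le_csSup
    ⟨‖M‖ ^ 2, by rintro _ ⟨u, v, hu, hv, -, rfl⟩; exact wedgeNorm_apply_le_sq_opNorm M hu hv⟩
    ⟨u, v, hu, hv, huv, rfl⟩

lemma wedgeNorm_apply_le_wedgeOpNorm_mul_norm {x w : EuclideanSpace ℝ (Fin m)} (hx : ‖x‖ = 1)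
    (hxw : ⟪x, w⟫ = 0) : wedgeNorm (M x) (M w) ≤ wedgeOpNorm M * ‖w‖ := by
  rcases eq_or_ne w 0 with rfl | hw
  · simp [wedgeNorm]
  set u := ‖w‖⁻¹ • w
  have hMw : M w = ‖w‖ • M u := by rw [← map_smul, smul_inv_smul₀ (norm_ne_zero_iff.mpr hw)]
  have horth : ⟪x, u⟫ = 0 := by rw [real_inner_smul_right, hxw, mul_zero]
  rw [hMw, wedgeNorm.smul_right, abs_norm, mul_comm]
  exact mul_le_mul_of_nonneg_right
    (wedgeNorm_apply_le_wedgeOpNorm M hx (norm_smul_inv_norm hw) horth) (norm_nonneg w)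

lemma wedgeNorm_apply_le_wedgeOpNorm_mul {x : EuclideanSpace ℝ (Fin m)} (hx : ‖x‖ = 1)
    (y : EuclideanSpace ℝ (Fin m)) : wedgeNorm (M x) (M y) ≤ wedgeOpNorm M * wedgeNorm x y := by
  set w := y - ⟪x, y⟫ • x
  have hy : y = ⟪x, y⟫ • x + w := (add_sub_cancel _ _).symm
  have hxw : ⟪x, w⟫ = 0 := by
    rw [inner_sub_right, real_inner_smul_right, real_inner_self_eq_norm_sq, hx]; ring
  calc wedgeNorm (M x) (M y) = wedgeNorm (M x) (M w) := by
        rw [hy, map_add, map_smul, wedgeNorm.smul_add_right]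
    _ ≤ wedgeOpNorm M * ‖w‖ := wedgeNorm_apply_le_wedgeOpNorm_mul_norm M hx hxw
    _ = wedgeOpNorm M * wedgeNorm x y := by
        rw [hy, wedgeNorm.smul_add_right, wedgeNorm.of_inner_eq_zero hxw, hx, one_mul]

lemma wedgeNorm_apply_le_sq_opNorm_mul {x : EuclideanSpace ℝ (Fin m)} (hx : ‖x‖ = 1)
    (y : EuclideanSpace ℝ (Fin m)) : wedgeNorm (M x) (M y) ≤ ‖M‖ ^ 2 * wedgeNorm x y :=
  (wedgeNorm_apply_le_wedgeOpNorm_mul M hx y).trans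
    (mul_le_mul_of_nonneg_right (wedgeOpNorm_le_sq_opNorm M) (wedgeNorm.nonneg x y))

end wedgeOpNorm

/-- For `M ∈ GL(m)` acting on projective space with the angular distance
`d(x̂, ŷ) = ‖x ∧ y‖` (unit representatives): the distortion satisfies
`d(Mx̂, Mŷ)/d(x̂, ŷ) ≤ ‖∧²M‖/(‖Mx‖·‖My‖)`, and consequently the Lipschitz constant of
the projective action of `M` is at most `‖M‖²·‖M⁻¹‖²`. -/
theorem projective_action_distortion_bound
    {m : ℕ} (M : EuclideanSpace ℝ (Fin m) ≃L[ℝ] EuclideanSpace ℝ (Fin m)) :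
    (∀ x y : EuclideanSpace ℝ (Fin m), ‖x‖ = 1 → ‖y‖ = 1 → wedgeNorm x y ≠ 0 →
      (wedgeNorm (M x) (M y) / (‖M x‖ * ‖M y‖)) / wedgeNorm x y
        ≤ wedgeOpNorm (M : EuclideanSpace ℝ (Fin m) →L[ℝ] EuclideanSpace ℝ (Fin m))
          / (‖M x‖ * ‖M y‖)) ∧
    (∀ x y : EuclideanSpace ℝ (Fin m), ‖x‖ = 1 → ‖y‖ = 1 →
      wedgeNorm ((‖M x‖)⁻¹ • M x) ((‖M y‖)⁻¹ • M y)
        ≤ ‖(M : EuclideanSpace ℝ (Fin m) →L[ℝ] EuclideanSpace ℝ (Fin m))‖ ^ 2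
          * ‖(M.symm : EuclideanSpace ℝ (Fin m) →L[ℝ] EuclideanSpace ℝ (Fin m))‖ ^ 2
          * wedgeNorm x y) := by
  set N := (M : EuclideanSpace ℝ (Fin m) →L[ℝ] EuclideanSpace ℝ (Fin m))
  refine ⟨fun x y hx _ hxy => ?_, fun x y hx hy => ?_⟩
  · have hpos : 0 < wedgeNorm x y := (wedgeNorm.nonneg x y).lt_of_ne' hxy
    rw [div_right_comm]
    gcongr
    exact (div_le_iff₀ hpos).mpr (wedgeNorm_apply_le_wedgeOpNorm_mul N hx y)
  · set K := ‖(M.symm : EuclideanSpace ℝ (Fin m) →L[ℝ] EuclideanSpace ℝ (Fin m))‖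
    calc wedgeNorm ((‖M x‖)⁻¹ • M x) ((‖M y‖)⁻¹ • M y)
        = ‖M x‖⁻¹ * ‖M y‖⁻¹ * wedgeNorm (M x) (M y) := by
          rw [wedgeNorm.smul_left, wedgeNorm.smul_right, abs_inv, abs_inv, abs_norm, abs_norm,
            mul_assoc]
      _ ≤ K * K * (‖N‖ ^ 2 * wedgeNorm x y) := by
          gcongr
          · exact wedgeNorm.nonneg _ _
          · exact M.inv_norm_apply_le_norm_symm hx
          · exact M.inv_norm_apply_le_norm_symm hy
          · exact wedgeNorm_apply_le_sq_opNorm_mul N hx y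
      _ = ‖N‖ ^ 2 * K ^ 2 * wedgeNorm x y := by ring
end

section
/- Let f : Ω × I → I be a random map whose fiber maps f_ω are homeomorphisms of a compact interval I onto their images. If there exist a Borel probability measure μ on I with (f_ω)_*μ = μ for ℙ-almost every ω, then there exist points p, q ∈ I with f_ω({p,q}) = {p,q} for ℙ-almost every ω. -/
open MeasureTheory

/-- If the fiber maps of a random map on a compact interval are homeomorphisms onto
their images (continuous and injective) and they share a common invariant Borel
probability measure, then there are points `u, v` in the interval such that
`f_ω({u,v}) = {u,v}` for `ℙ`-almost every `ω`. -/
theorem common_invariant_measure_implies_two_point_invariant_set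
    (a b : ℝ) {T : Type*} [MeasurableSpace T]
    (p : MeasureTheory.Measure T) [IsProbabilityMeasure p]
    (ℙ : MeasureTheory.Measure (ℕ → T)) [IsProbabilityMeasure ℙ]
    (hbern : MeasureTheory.Measure.map (fun ω => (ω 0, fun n => ω (n + 1))) ℙ
      = p.prod ℙ)
    (f : T → Set.Icc a b → Set.Icc a b)
    (hfc : ∀ t, Continuous (f t)) (hfi : ∀ t, Function.Injective (f t))
    (μ : MeasureTheory.Measure (Set.Icc a b)) [IsProbabilityMeasure μ]
    (hinv : ∀ᵐ ω ∂ℙ, μ.map (f (ω 0)) = μ) :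
    ∃ u v : Set.Icc a b, ∀ᵐ ω ∂ℙ, f (ω 0) '' {u, v} = {u, v} := by
  classical
  -- the interval is nonempty since it carries a probability measure
  have hne : Nonempty (Set.Icc a b) := by
    by_contra h
    rw [not_nonempty_iff] at h
    have h1 := measure_univ (μ := μ)
    rw [Set.univ_eq_empty_iff.mpr h, measure_empty] at h1
    exact one_ne_zero h1.symm
  obtain ⟨x0⟩ := hne
  have hab : a ≤ b := x0.2.1.trans x0.2.2
  haveI : Fact (a ≤ b) := ⟨hab⟩
  -- the support of μ
  set K : Set (Set.Icc a b) := {x | ∀ U ∈ nhds x, 0 < μ U} with hK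
  have hKclosed : IsClosed K := by
    rw [← isOpen_compl_iff, isOpen_iff_mem_nhds]
    intro x hx
    simp only [hK, Set.mem_compl_iff, Set.mem_setOf_eq] at hx
    push_neg at hx
    obtain ⟨U, hU, hU0⟩ := hx
    have hU0 : μ U = 0 := le_antisymm hU0 zero_le
    obtain ⟨V, hVU, hVopen, hxV⟩ := mem_nhds_iff.mp hU
    refine Filter.mem_of_superset (hVopen.mem_nhds hxV) ?_
    intro y hy hyK
    exact absurd ((hyK V (hVopen.mem_nhds hy)).trans_le (measure_mono hVU)).ne'
      (by simpa using hU0)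
  have hKc : μ Kᶜ = 0 := by
    apply measure_null_of_locally_null
    intro x hx
    simp only [hK, Set.mem_compl_iff, Set.mem_setOf_eq] at hx
    push_neg at hx
    obtain ⟨U, hU, hU0⟩ := hx
    exact ⟨U, mem_nhdsWithin_of_mem_nhds hU, le_antisymm hU0 zero_le⟩
  have hKne : K.Nonempty := by
    rw [Set.nonempty_iff_ne_empty]
    intro h
    have h1 := hKc
    rw [h, Set.compl_empty, measure_univ] at h1
    exact one_ne_zero h1
  have hKcompact : IsCompact K := hKclosed.isCompact
  obtain ⟨u, hu⟩ := hKcompact.exists_isLeast hKne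
  obtain ⟨v, hv⟩ := hKcompact.exists_isGreatest hKne
  refine ⟨u, v, ?_⟩
  filter_upwards [hinv] with ω hω
  set t := ω 0
  -- f t maps the support onto itself
  have himg : f t '' K = K := by
    apply Set.Subset.antisymm
    · rintro _ ⟨x, hx, rfl⟩
      intro U hU
      obtain ⟨V, hVU, hVopen, hxV⟩ := mem_nhds_iff.mp hU
      have h1 : 0 < μ (f t ⁻¹' V) := hx _ ((hVopen.preimage (hfc t)).mem_nhds hxV)
      have h2 : μ (f t ⁻¹' V) = μ V := by
        conv_rhs => rw [← hω]
        rw [Measure.map_apply (hfc t).measurable hVopen.measurableSet]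
      exact (h1.trans_le (h2.le.trans (measure_mono hVU)))
    · intro y hy
      by_contra hyn
      have hcompact : IsCompact (f t '' K) := hKcompact.image (hfc t)
      have hclosed := hcompact.isClosed
      have hmem : (f t '' K)ᶜ ∈ nhds y := hclosed.isOpen_compl.mem_nhds hyn
      have hpos := hy _ hmem
      have hmeas : μ ((f t '' K)ᶜ) = μ (f t ⁻¹' (f t '' K)ᶜ) := by
        conv_lhs => rw [← hω]
        rw [Measure.map_apply (hfc t).measurable hclosed.isOpen_compl.measurableSet]
      have hsub : f t ⁻¹' (f t '' K)ᶜ ⊆ Kᶜ := fun x hx hxK => hx (Set.mem_image_of_mem _ hxK)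
      have hzero : μ ((f t '' K)ᶜ) = 0 := by
        rw [hmeas]; exact measure_mono_null hsub hKc
      exact absurd hzero hpos.ne'
  have huimg : u ∈ f t '' K := by rw [himg]; exact hu.1
  have hvimg : v ∈ f t '' K := by rw [himg]; exact hv.1
  have hfuK : f t u ∈ K := by rw [← himg]; exact Set.mem_image_of_mem _ hu.1
  have hfvK : f t v ∈ K := by rw [← himg]; exact Set.mem_image_of_mem _ hv.1
  rcases (hfc t).strictMono_of_inj_boundedOrder' (hfi t) with hm | hm
  · have h1 : f t u = u := by
      obtain ⟨w, hwK, hw⟩ := huimg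
      refine le_antisymm ?_ (hu.2 hfuK)
      calc f t u ≤ f t w := hm.monotone (hu.2 hwK)
        _ = u := hw
    have h2 : f t v = v := by
      obtain ⟨w, hwK, hw⟩ := hvimg
      refine le_antisymm (hv.2 hfvK) ?_
      calc v = f t w := hw.symm
        _ ≤ f t v := hm.monotone (hv.2 hwK)
    rw [Set.image_pair, h1, h2]
  · have h1 : f t u = v := by
      obtain ⟨w, hwK, hw⟩ := hvimg
      refine le_antisymm (hv.2 hfuK) ?_
      calc v = f t w := hw.symm
        _ ≤ f t u := hm.antitone (hu.2 hwK)
    have h2 : f t v = u := by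
      obtain ⟨w, hwK, hw⟩ := huimg
      refine le_antisymm ?_ (hu.2 hfvK)
      calc f t v ≤ f t w := hm.antitone (hv.2 hwK)
        _ = u := hw
    rw [Set.image_pair, h1, h2, Set.pair_comm]
end
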